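/- arXiv:1812.05137 — 3 statements merged into one kernel-verified Lean document; each statement's English description precedes it below -/
import Mathlib

section
/- For every b > 0 and every t with 0 < t ≤ T, the integral ∫₀ᵗ (1/v) e^{-b/v} dv is at most |ln(T/b)| + 1. -/
open MeasureTheory Real

/-!
Split the integral at `v = b`. On `(0, b]` the integrand is at most `1 / b`, since with
`x = b / v` it equals `x e^{-x} / b` and `x ≤ e^x`; this part contributes at most `1`.
On `(b, t]` the integrand is at most `1 / v`, which contributes
`log (t / b) ≤ log⁺ (T / b) ≤ |log (T / b)|`.
-/

lemma one_div_mul_exp_neg_div_le_inv {b v : ℝ} (hb : 0 < b) (hv : 0 < v) :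
    1 / v * exp (-b / v) ≤ b⁻¹ := by
  have hx : b / v ≤ exp (b / v) := (le_add_of_nonneg_right zero_le_one).trans (add_one_le_exp _)
  calc 1 / v * exp (-b / v) = b⁻¹ * (b / v / exp (b / v)) := by
        rw [neg_div, exp_neg]; field_simp
    _ ≤ b⁻¹ * 1 := by gcongr; exact div_le_one_of_le₀ hx (exp_pos _).le
    _ = b⁻¹ := mul_one _

lemma one_div_mul_exp_neg_div_le_one_div {b v : ℝ} (hb : 0 ≤ b) (hv : 0 < v) :
    1 / v * exp (-b / v) ≤ 1 / v := by
  have hexp : exp (-b / v) ≤ 1 :=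
    exp_le_one_iff.mpr (div_nonpos_of_nonpos_of_nonneg (neg_nonpos.mpr hb) hv.le)
  simpa using mul_le_mul_of_nonneg_left hexp (one_div_pos.mpr hv).le

lemma integrableOn_one_div_mul_exp_neg_div_Ioc_zero {b : ℝ} (hb : 0 < b) (s : ℝ) :
    IntegrableOn (fun v ↦ 1 / v * exp (-b / v)) (Set.Ioc 0 s) := by
  refine Integrable.mono' (integrable_const b⁻¹) (by fun_prop) ?_
  filter_upwards [ae_restrict_mem measurableSet_Ioc] with v hv
  rw [norm_of_nonneg (by have := hv.1; positivity)]
  exact one_div_mul_exp_neg_div_le_inv hb hv.1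

lemma setIntegral_Ioc_zero_one_div_mul_exp_neg_div_le {b s : ℝ} (hb : 0 < b) (hs : 0 ≤ s) :
    ∫ v in Set.Ioc 0 s, 1 / v * exp (-b / v) ≤ s / b :=
  calc ∫ v in Set.Ioc 0 s, 1 / v * exp (-b / v)
      ≤ ∫ _ in Set.Ioc 0 s, b⁻¹ :=
        setIntegral_mono_on (integrableOn_one_div_mul_exp_neg_div_Ioc_zero hb s)
          (integrableOn_const (by simp)) measurableSet_Ioc
          fun v hv ↦ one_div_mul_exp_neg_div_le_inv hb hv.1
    _ = s / b := by
        rw [setIntegral_const, volume_real_Ioc_of_le hs, smul_eq_mul, sub_zero, div_eq_mul_inv]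

lemma setIntegral_Ioc_one_div_mul_exp_neg_div_le_log {a b t : ℝ} (ha : 0 < a) (hb : 0 ≤ b)
    (hat : a ≤ t) : ∫ v in Set.Ioc a t, 1 / v * exp (-b / v) ≤ log (t / a) := by
  have hne : ∀ v ∈ Set.Icc a t, v ≠ 0 := fun v hv ↦ (ha.trans_le hv.1).ne'
  have hinv : IntegrableOn (fun v : ℝ ↦ 1 / v) (Set.Ioc a t) :=
    (ContinuousOn.integrableOn_Icc (by fun_prop (disch := assumption))).mono_set
      Set.Ioc_subset_Icc_self
  have hf : IntegrableOn (fun v ↦ 1 / v * exp (-b / v)) (Set.Ioc a t) :=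
    (ContinuousOn.integrableOn_Icc (by fun_prop (disch := assumption))).mono_set
      Set.Ioc_subset_Icc_self
  calc ∫ v in Set.Ioc a t, 1 / v * exp (-b / v)
      ≤ ∫ v in Set.Ioc a t, 1 / v :=
        setIntegral_mono_on hf hinv measurableSet_Ioc
          fun v hv ↦ one_div_mul_exp_neg_div_le_one_div hb (ha.trans hv.1)
    _ = log (t / a) := by
        rw [← intervalIntegral.integral_of_le hat, integral_one_div_of_pos ha (ha.trans_le hat)]

lemma setIntegral_Ioc_zero_one_div_mul_exp_neg_div_le_one_add_posLog {b t : ℝ} (hb : 0 < b)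
    (ht : 0 ≤ t) : ∫ v in Set.Ioc 0 t, 1 / v * exp (-b / v) ≤ 1 + log⁺ (t / b) := by
  rcases le_or_gt t b with htb | hbt
  · calc ∫ v in Set.Ioc 0 t, 1 / v * exp (-b / v) ≤ t / b :=
          setIntegral_Ioc_zero_one_div_mul_exp_neg_div_le hb ht
      _ ≤ 1 := div_le_one_of_le₀ htb hb.le
      _ ≤ 1 + log⁺ (t / b) := le_add_of_nonneg_right posLog_nonneg
  · have hint := integrableOn_one_div_mul_exp_neg_div_Ioc_zero hb t
    rw [← Set.Ioc_union_Ioc_eq_Ioc hb.le hbt.le,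
      setIntegral_union (Set.Ioc_disjoint_Ioc_of_le le_rfl) measurableSet_Ioc
        (hint.mono_set (Set.Ioc_subset_Ioc_right hbt.le))
        (hint.mono_set (Set.Ioc_subset_Ioc_left hb.le)),
      posLog_eq_log ((one_le_div₀ hb).mpr hbt.le |>.trans (le_abs_self _))]
    gcongr
    · simpa [div_self hb.ne'] using setIntegral_Ioc_zero_one_div_mul_exp_neg_div_le hb hb.le
    · exact setIntegral_Ioc_one_div_mul_exp_neg_div_le_log hb hb.le hbt.le

theorem integral_inv_mul_exp_neg_div_le_general (T : ℝ) :
    ∀ b t : ℝ, 0 < b → 0 < t → t ≤ T →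
      ∫ v in Set.Ioc (0:ℝ) t, (1 / v) * Real.exp (-b / v) ≤ |Real.log (T / b)| + 1 := by
  intro b t hb ht htT
  calc ∫ v in Set.Ioc (0:ℝ) t, (1 / v) * Real.exp (-b / v)
      ≤ 1 + log⁺ (t / b) :=
        setIntegral_Ioc_zero_one_div_mul_exp_neg_div_le_one_add_posLog hb ht.le
    _ ≤ 1 + log⁺ (T / b) := by gcongr
    _ ≤ |log (T / b)| + 1 := by
        rw [add_comm, posLog_apply]
        gcongr
        exact max_le (abs_nonneg _) (le_abs_self _)

/-- For every `b > 0` and every `t` with `0 < t ≤ T`,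
`∫₀ᵗ (1/v) e^{-b/v} dv ≤ |ln(T/b)| + 1`. -/
theorem integral_inv_mul_exp_neg_div_le (T : ℝ) (hT : 0 < T) :
    ∀ b t : ℝ, 0 < b → 0 < t → t ≤ T →
      ∫ v in Set.Ioc (0:ℝ) t, (1 / v) * Real.exp (-b / v) ≤ |Real.log (T / b)| + 1 :=
  integral_inv_mul_exp_neg_div_le_general T
end

section
/- Let h : ℝ₊ × ℝ^d → ℝ and h̄ : ℝ^d → ℝ be measurable functions such that H(r,y) = h(r,y) - h̄(y) is bounded and G(r,y) = ∫₀ʳ (h(v,y) - h̄(y)) dv is bounded. Then sup over y ∈ ℝ^d, D > 0, ε > 0, t ∈ (0,T] of |(1/√ε) ∫₀ᵗ (e^{-D/(t-s)}/√(t-s)) (h(s/ε, y) - h̄(y)) ds| is finite. -/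
/-!
With `K(s) = e^{-D/(t-s)}/√(t-s)` and `f(s) = h(s/ε, y) - h̄(y)`, the primitive
`F(r) = ∫₀ʳ f = ε G(r/ε, y)` is `O(ε)`, while `|f| ≤ C_h`. Split `[0, t]` at `t - ε`.
Near the singularity, `K(s) ≤ (t-s)^{-1/2}` bounds the integral by `2 C_h √ε`. On `[0, t - ε]`
integrate by parts against `F`: the boundary term is at most `ε C_G / √ε`, and since
`|K'(s)| ≤ (t-s)^{-3/2}` the remaining integral is at most `2 ε C_G / √ε`. So the integral is
`O(√ε)`, which the prefactor `1/√ε` cancels.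
-/

open MeasureTheory Real intervalIntegral Set

theorem integral_mul_eq_mul_integral_sub_integral_deriv_mul {K f : ℝ → ℝ} {a b : ℝ}
    (hK : AbsolutelyContinuousOnInterval K a b) (hf : IntervalIntegrable f volume a b) :
    ∫ x in a..b, K x * f x
      = K b * (∫ x in a..b, f x) - ∫ x in a..b, deriv K x * ∫ v in a..x, f v := by
  have hF := hf.absolutelyContinuousOnInterval_intervalIntegral (c := a) left_mem_uIcc
  have hparts := hK.integral_mul_deriv_eq_deriv_mul hF
  rw [integral_same, mul_zero, sub_zero] at hparts
  rw [← hparts]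
  refine integral_congr_ae ?_
  filter_upwards [hf.ae_hasDerivAt_integral] with x hx hxab
  rw [(hx (uIoc_subset_uIcc hxab) a left_mem_uIcc).deriv]

lemma hasDerivAt_sqrt_sub {t s : ℝ} (hs : s < t) :
    HasDerivAt (fun s => √(t - s)) (-1 / (2 * √(t - s))) s :=
  ((hasDerivAt_id s).const_sub t).sqrt (sub_pos.2 hs).ne'

lemma hasDerivAt_neg_two_mul_sqrt_sub {t s : ℝ} (hs : s < t) :
    HasDerivAt (fun s => -(2 * √(t - s))) (√(t - s))⁻¹ s := by
  have : √(t - s) ≠ 0 := (sqrt_pos.2 (sub_pos.2 hs)).ne'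
  refine ((hasDerivAt_sqrt_sub hs).const_mul 2).neg.congr_deriv ?_
  field_simp

lemma hasDerivAt_two_mul_inv_sqrt_sub {t s : ℝ} (hs : s < t) :
    HasDerivAt (fun s => 2 * (√(t - s))⁻¹) ((t - s) * √(t - s))⁻¹ s := by
  have hpos : 0 < t - s := sub_pos.2 hs
  have : √(t - s) ≠ 0 := (sqrt_pos.2 hpos).ne'
  refine (((hasDerivAt_sqrt_sub hs).inv this).const_mul 2).congr_deriv ?_
  field_simp
  rw [sq_sqrt hpos.le]

lemma intervalIntegrable_inv_sqrt_sub {a b t : ℝ} (hab : a ≤ b) (hbt : b ≤ t) :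
    IntervalIntegrable (fun s => (√(t - s))⁻¹) volume a b := by
  refine (intervalIntegrable_iff_integrableOn_Ioc_of_le hab).2 ?_
  refine integrableOn_deriv_of_nonneg (g := fun s => -(2 * √(t - s))) (by fun_prop)
    (fun s hs => hasDerivAt_neg_two_mul_sqrt_sub (hs.2.trans_le hbt)) (fun s _ => by positivity)

lemma integral_inv_sqrt_sub {a b t : ℝ} (hab : a ≤ b) (hbt : b ≤ t) :
    ∫ s in a..b, (√(t - s))⁻¹ = 2 * √(t - a) - 2 * √(t - b) := by
  rw [integral_eq_sub_of_hasDerivAt_of_le hab (by fun_prop)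
    (fun s hs => hasDerivAt_neg_two_mul_sqrt_sub (hs.2.trans_le hbt))
    (intervalIntegrable_inv_sqrt_sub hab hbt)]
  ring

lemma intervalIntegrable_inv_mul_sqrt_sub {a b t : ℝ} (hab : a ≤ b) (hbt : b < t) :
    IntervalIntegrable (fun s => ((t - s) * √(t - s))⁻¹) volume a b := by
  refine ContinuousOn.intervalIntegrable (ContinuousOn.inv₀ (by fun_prop) fun s hs => ?_)
  rw [uIcc_of_le hab] at hs
  have hpos : 0 < t - s := sub_pos.2 (hs.2.trans_lt hbt)
  positivity

lemma integral_inv_mul_sqrt_sub {a b t : ℝ} (hab : a ≤ b) (hbt : b < t) :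
    ∫ s in a..b, ((t - s) * √(t - s))⁻¹ = 2 * (√(t - b))⁻¹ - 2 * (√(t - a))⁻¹ :=
  integral_eq_sub_of_hasDerivAt_of_le hab
    (fun _ hs =>
      (hasDerivAt_two_mul_inv_sqrt_sub (hs.2.trans_lt hbt)).continuousAt.continuousWithinAt)
    (fun _ hs => hasDerivAt_two_mul_inv_sqrt_sub (hs.2.trans hbt))
    (intervalIntegrable_inv_mul_sqrt_sub hab hbt)

section HeatKernel

noncomputable def heatKernel (D t s : ℝ) : ℝ := exp (-D / (t - s)) / √(t - s)

variable {D t s : ℝ}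

lemma heatKernel_nonneg : 0 ≤ heatKernel D t s := by unfold heatKernel; positivity

lemma heatKernel_le_inv_sqrt (hD : 0 ≤ D) : heatKernel D t s ≤ (√(t - s))⁻¹ := by
  rcases le_or_gt t s with hts | hst
  · simp [heatKernel, sqrt_eq_zero'.2 (sub_nonpos.2 hts)]
  · rw [heatKernel, div_eq_mul_inv]
    refine mul_le_of_le_one_left (by positivity) (exp_le_one_iff.2 ?_)
    exact div_nonpos_of_nonpos_of_nonneg (neg_nonpos.2 hD) (sub_pos.2 hst).le

lemma abs_heatKernel_mul_le (hD : 0 ≤ D) (x : ℝ) :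
    |heatKernel D t s * x| ≤ |x| * (√(t - s))⁻¹ := by
  rw [abs_mul, abs_of_nonneg heatKernel_nonneg, mul_comm]
  exact mul_le_mul_of_nonneg_left (heatKernel_le_inv_sqrt hD) (abs_nonneg x)

lemma measurable_heatKernel : Measurable (heatKernel D t) := by
  unfold heatKernel; fun_prop

lemma hasDerivAt_heatKernel (hs : s < t) :
    HasDerivAt (heatKernel D t)
      (exp (-D / (t - s)) * (1 / 2 - D / (t - s)) / ((t - s) * √(t - s))) s := by
  have hpos : 0 < t - s := sub_pos.2 hs
  have hsqrt : √(t - s) ≠ 0 := (sqrt_pos.2 hpos).ne'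
  have hexp : HasDerivAt (fun s => exp (-D / (t - s)))
      (exp (-D / (t - s)) * (-D / (t - s) ^ 2)) s := by
    have := ((((hasDerivAt_id s).const_sub t).inv hpos.ne').const_mul (-D)).exp
    convert this using 1
    · simp only [div_eq_mul_inv, Pi.inv_apply, id, neg_mul]
    · simp only [div_eq_mul_inv, Pi.inv_apply, id]
      ring
  refine (hexp.div (hasDerivAt_sqrt_sub hs) hsqrt).congr_deriv ?_
  field_simp
  rw [sq_sqrt hpos.le]
  ring

lemma contDiffAt_heatKernel (hs : s < t) : ContDiffAt ℝ 1 (heatKernel D t) s := by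
  unfold heatKernel
  fun_prop (disch := positivity)

lemma abs_exp_neg_mul_half_sub_le_one {x : ℝ} (hx : 0 ≤ x) :
    |exp (-x) * (1 / 2 - x)| ≤ 1 := by
  rw [abs_mul, abs_of_pos (exp_pos _), exp_neg, inv_mul_le_iff₀ (exp_pos _), mul_one]
  have := add_one_le_exp x
  exact abs_sub_le_iff.2 ⟨by linarith, by linarith⟩

lemma abs_deriv_heatKernel_le (hD : 0 ≤ D) (hs : s < t) :
    |deriv (heatKernel D t) s| ≤ ((t - s) * √(t - s))⁻¹ := by
  have hpos : 0 < t - s := sub_pos.2 hs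
  rw [(hasDerivAt_heatKernel hs).deriv, abs_div, abs_of_pos (mul_pos hpos (sqrt_pos.2 hpos)),
    div_eq_mul_inv]
  refine mul_le_of_le_one_left (by positivity) ?_
  simpa only [neg_div] using abs_exp_neg_mul_half_sub_le_one (div_nonneg hD hpos.le)

lemma absolutelyContinuousOnInterval_heatKernel {a b : ℝ} (hab : a ≤ b) (hbt : b < t) :
    AbsolutelyContinuousOnInterval (heatKernel D t) a b := by
  refine ContDiffOn.absolutelyContinuousOnInterval fun s hs => ?_
  rw [uIcc_of_le hab] at hs
  exact (contDiffAt_heatKernel (hs.2.trans_lt hbt)).contDiffWithinAt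

lemma intervalIntegrable_heatKernel_mul {f : ℝ → ℝ} {a b M : ℝ} (hD : 0 ≤ D) (hab : a ≤ b)
    (hbt : b ≤ t) (hf : IntervalIntegrable f volume a b) (hM : ∀ s ∈ Ioc a b, |f s| ≤ M) :
    IntervalIntegrable (fun s => heatKernel D t s * f s) volume a b := by
  refine ((intervalIntegrable_inv_sqrt_sub hab hbt).const_mul M).mono_fun'
    (measurable_heatKernel.aestronglyMeasurable.mul hf.def'.aestronglyMeasurable) ?_
  rw [uIoc_of_le hab]
  filter_upwards [ae_restrict_mem measurableSet_Ioc] with s hs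
  exact (abs_heatKernel_mul_le hD _).trans (mul_le_mul_of_nonneg_right (hM s hs) (by positivity))

lemma abs_integral_heatKernel_mul_le_of_bound {f : ℝ → ℝ} {b M : ℝ} (hD : 0 ≤ D) (hbt : b ≤ t)
    (hM : ∀ s ∈ Ioc b t, |f s| ≤ M) :
    |∫ s in b..t, heatKernel D t s * f s| ≤ 2 * M * √(t - b) := by
  have hbound := norm_integral_le_of_norm_le hbt (f := fun s => heatKernel D t s * f s)
    (g := fun s => M * (√(t - s))⁻¹) ?_
    ((intervalIntegrable_inv_sqrt_sub hbt le_rfl).const_mul M)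
  · rw [intervalIntegral.integral_const_mul, integral_inv_sqrt_sub hbt le_rfl, sub_self, sqrt_zero,
      norm_eq_abs] at hbound
    linarith
  · filter_upwards with s hs
    exact (abs_heatKernel_mul_le hD _).trans (mul_le_mul_of_nonneg_right (hM s hs) (by positivity))

lemma abs_integral_heatKernel_mul_le_of_primitive_bound {f : ℝ → ℝ} {a b N : ℝ} (hD : 0 ≤ D)
    (hab : a ≤ b) (hbt : b < t) (hf : IntervalIntegrable f volume a b)
    (hN : ∀ r ∈ Icc a b, |∫ v in a..r, f v| ≤ N) :
    |∫ s in a..b, heatKernel D t s * f s| ≤ 3 * N / √(t - b) := by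
  have hN0 : 0 ≤ N := (abs_nonneg _).trans (hN a ⟨le_rfl, hab⟩)
  have hboundary : |heatKernel D t b * ∫ v in a..b, f v| ≤ N * (√(t - b))⁻¹ :=
    (abs_heatKernel_mul_le hD _).trans
      (mul_le_mul_of_nonneg_right (hN b ⟨hab, le_rfl⟩) (by positivity))
  have hbulk : |∫ r in a..b, deriv (heatKernel D t) r * ∫ v in a..r, f v|
      ≤ N * (2 * (√(t - b))⁻¹ - 2 * (√(t - a))⁻¹) := by
    rw [← integral_inv_mul_sqrt_sub hab hbt, ← intervalIntegral.integral_const_mul,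
      ← norm_eq_abs]
    refine norm_integral_le_of_norm_le hab ?_
      ((intervalIntegrable_inv_mul_sqrt_sub hab hbt).const_mul N)
    filter_upwards with r hr
    rw [norm_mul, mul_comm N]
    have hpos : 0 < t - r := sub_pos.2 (hr.2.trans_lt hbt)
    exact mul_le_mul (abs_deriv_heatKernel_le hD (hr.2.trans_lt hbt))
      (hN r (Ioc_subset_Icc_self hr)) (norm_nonneg _) (by positivity)
  rw [integral_mul_eq_mul_integral_sub_integral_deriv_mul
    (absolutelyContinuousOnInterval_heatKernel hab hbt) hf]
  have : 0 ≤ N * (√(t - a))⁻¹ := by positivity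
  calc _ ≤ _ := abs_sub _ _
    _ ≤ _ := add_le_add hboundary hbulk
    _ ≤ 3 * N / √(t - b) := by rw [div_eq_mul_inv]; linarith

theorem abs_integral_heatKernel_mul_le {f : ℝ → ℝ} {δ M N : ℝ} (hD : 0 ≤ D) (hδ : 0 < δ)
    (ht : 0 ≤ t) (hf : IntervalIntegrable f volume 0 t) (hM : ∀ s ∈ Icc 0 t, |f s| ≤ M)
    (hN : ∀ r ∈ Icc 0 t, |∫ v in 0..r, f v| ≤ N) :
    |∫ s in 0..t, heatKernel D t s * f s| ≤ 3 * N / √δ + 2 * M * √δ := by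
  have hN0 : 0 ≤ N := (abs_nonneg _).trans (hN 0 ⟨le_rfl, ht⟩)
  have hM0 : 0 ≤ M := (abs_nonneg _).trans (hM 0 ⟨le_rfl, ht⟩)
  rcases le_or_gt t δ with htδ | hδt
  · have : 0 ≤ 3 * N / √δ := by positivity
    calc _ ≤ 2 * M * √(t - 0) :=
          abs_integral_heatKernel_mul_le_of_bound hD ht fun s hs => hM s (Ioc_subset_Icc_self hs)
      _ ≤ 2 * M * √δ := by gcongr; linarith
      _ ≤ _ := by linarith
  · obtain ⟨b, rfl⟩ : ∃ b, t = b + δ := ⟨t - δ, by ring⟩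
    have hb : 0 ≤ b := by linarith
    have hbt : b < b + δ := by linarith
    have hf₁ : IntervalIntegrable f volume 0 b :=
      hf.mono_set (by rw [uIcc_of_le hb, uIcc_of_le ht]; exact Icc_subset_Icc_right hbt.le)
    have hf₂ : IntervalIntegrable f volume b (b + δ) :=
      hf.mono_set (by rw [uIcc_of_le hbt.le, uIcc_of_le ht]; exact Icc_subset_Icc_left hb)
    have hM₁ : ∀ s ∈ Ioc 0 b, |f s| ≤ M := fun s hs => hM s ⟨hs.1.le, hs.2.trans hbt.le⟩
    have hM₂ : ∀ s ∈ Ioc b (b + δ), |f s| ≤ M := fun s hs => hM s ⟨hb.trans hs.1.le, hs.2⟩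
    rw [← integral_add_adjacent_intervals (intervalIntegrable_heatKernel_mul hD hb hbt.le hf₁ hM₁)
      (intervalIntegrable_heatKernel_mul hD hbt.le le_rfl hf₂ hM₂)]
    have hprimitive := abs_integral_heatKernel_mul_le_of_primitive_bound hD hb hbt hf₁
      fun r hr => hN r ⟨hr.1, hr.2.trans hbt.le⟩
    have htail := abs_integral_heatKernel_mul_le_of_bound hD hbt.le hM₂
    rw [add_sub_cancel_left] at hprimitive htail
    exact (abs_add_le _ _).trans (add_le_add hprimitive htail)

end HeatKernel

theorem averaging_kernel_estimate_general (d : ℕ) (T : ℝ)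
    (h : ℝ → (Fin d → ℝ) → ℝ) (hbar : (Fin d → ℝ) → ℝ)
    (hmeas : Measurable (Function.uncurry h))
    (CH : ℝ) (hH : ∀ r : ℝ, 0 ≤ r → ∀ y, |h r y - hbar y| ≤ CH)
    (CG : ℝ) (hG : ∀ r : ℝ, 0 ≤ r → ∀ y,
      |∫ v in (0:ℝ)..r, (h v y - hbar y)| ≤ CG) :
    ∃ C : ℝ, ∀ (y : Fin d → ℝ) (D ε t : ℝ), 0 < D → 0 < ε → 0 < t → t ≤ T →
      |(1 / Real.sqrt ε) *
        ∫ s in (0:ℝ)..t,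
          (Real.exp (-D / (t - s)) / Real.sqrt (t - s)) * (h (s / ε) y - hbar y)|
        ≤ C := by
  refine ⟨3 * CG + 2 * CH, fun y D ε t hD hε ht _ => ?_⟩
  set f : ℝ → ℝ := fun s => h (s / ε) y - hbar y
  have hM : ∀ s ∈ Icc 0 t, |f s| ≤ CH := fun s hs => hH _ (div_nonneg hs.1 hε.le) y
  have hf : IntervalIntegrable f volume 0 t := by
    have hf_meas : Measurable f :=
      (hmeas.comp ((measurable_id.div_const ε).prodMk measurable_const)).sub_const _
    refine (intervalIntegrable_const (c := CH)).mono_fun' hf_meas.aestronglyMeasurable ?_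
    filter_upwards [ae_restrict_mem measurableSet_uIoc] with s hs
    exact hM s (Ioc_subset_Icc_self (uIoc_of_le ht.le ▸ hs))
  have hN : ∀ r ∈ Icc 0 t, |∫ v in 0..r, f v| ≤ ε * CG := by
    intro r hr
    rw [intervalIntegral.integral_comp_div (fun v => h v y - hbar y) hε.ne', zero_div, smul_eq_mul,
      abs_mul, abs_of_pos hε]
    exact mul_le_mul_of_nonneg_left (hG _ (div_nonneg hr.1 hε.le) y) hε.le
  have hsqrt : 0 < √ε := sqrt_pos.2 hε
  calc _ = (√ε)⁻¹ * |∫ s in 0..t, heatKernel D t s * f s| := by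
        rw [abs_mul, one_div, abs_of_pos (inv_pos.2 hsqrt)]; rfl
    _ ≤ (√ε)⁻¹ * (3 * (ε * CG) / √ε + 2 * CH * √ε) := by
        gcongr; exact abs_integral_heatKernel_mul_le hD.le hε ht.le hf hM hN
    _ = 3 * CG + 2 * CH := by
        field_simp
        rw [sq_sqrt hε.le]
        ring

/-- Lemma 4.1 of the paper: if `H(r,y) = h(r,y) - h̄(y)` and
`G(r,y) = ∫₀ʳ (h(v,y) - h̄(y)) dv` are bounded, then the supremum over
`y ∈ ℝ^d`, `D > 0`, `ε > 0`, `t ∈ (0,T]` of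
`|(1/√ε) ∫₀ᵗ (e^{-D/(t-s)}/√(t-s)) (h(s/ε,y) - h̄(y)) ds|` is finite. -/
theorem averaging_kernel_estimate (d : ℕ) (T : ℝ) (hT : 0 < T)
    (h : ℝ → (Fin d → ℝ) → ℝ) (hbar : (Fin d → ℝ) → ℝ)
    (hmeas : Measurable (Function.uncurry h)) (hbarmeas : Measurable hbar)
    (CH : ℝ) (hH : ∀ r : ℝ, 0 ≤ r → ∀ y, |h r y - hbar y| ≤ CH)
    (CG : ℝ) (hG : ∀ r : ℝ, 0 ≤ r → ∀ y,
      |∫ v in (0:ℝ)..r, (h v y - hbar y)| ≤ CG) :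
    ∃ C : ℝ, ∀ (y : Fin d → ℝ) (D ε t : ℝ), 0 < D → 0 < ε → 0 < t → t ≤ T →
      |(1 / Real.sqrt ε) *
        ∫ s in (0:ℝ)..t,
          (Real.exp (-D / (t - s)) / Real.sqrt (t - s)) * (h (s / ε) y - hbar y)|
        ≤ C :=
  averaging_kernel_estimate_general d T h hbar hmeas CH hH CG hG
end

section
/- For the heat kernel p(t,x) = (2√(πt))^{-1}e^{-x²/(4t)}, there is a constant C (depending on T and λ) such that for all t ∈ (0,T], x, y ∈ ℝ with |x - y| ≤ 2, and 0 < h ≤ 1: ∫₀ᵗ |e^{-(x-y-h)²/(4(t-s))} - e^{-(x-y)²/(4(t-s))}| / √(t-s) ds ≤ C·h·(1 + |ln h|). -/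
open MeasureTheory Real intervalIntegral Set

/-! After the substitution `u = t - s` the integrand is `|e^{-a²/(4u)} - e^{-b²/(4u)}| / √u` with
`|a - b| = h`. As `r ↦ e^{-r²}` is `1`-Lipschitz and takes values in `(0, 1]`, it is at most
`min (u^{-1/2}) (h/u)`. Integrating `u^{-1/2}` over `(0, h²)` and `h/u` over `(h², t)` gives
`h (2 + log⁺ (t/h²))`, which is `O(h (1 + |log h|))` uniformly in `t ≤ T`. -/

lemma lipschitzWith_one_exp_neg_sq : LipschitzWith 1 fun x : ℝ => exp (-x ^ 2) := by
  have hderiv (x : ℝ) : HasDerivAt (fun x : ℝ => exp (-x ^ 2)) (-(2 * x * exp (-x ^ 2))) x := by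
    convert ((hasDerivAt_pow 2 x).fun_neg).exp using 1
    simp only [Nat.cast_ofNat]
    ring
  refine lipschitzWith_of_nnnorm_deriv_le (fun x => (hderiv x).differentiableAt) fun x => ?_
  rw [(hderiv x).deriv, ← NNReal.coe_le_coe, coe_nnnorm, norm_neg, norm_eq_abs, NNReal.coe_one,
    abs_mul, abs_mul, abs_two, abs_exp, exp_neg, ← div_eq_mul_inv, div_le_one (exp_pos _)]
  calc 2 * |x| ≤ x ^ 2 + 1 := by nlinarith [sq_nonneg (|x| - 1), sq_abs x]
    _ ≤ exp (x ^ 2) := add_one_le_exp _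

lemma abs_exp_neg_sq_div_sub_le {c : ℝ} (hc : 0 < c) (a b : ℝ) :
    |exp (-a ^ 2 / c) - exp (-b ^ 2 / c)| ≤ |a - b| / √c := by
  have hscale (r : ℝ) : -r ^ 2 / c = -(r / √c) ^ 2 := by rw [div_pow, sq_sqrt hc.le, neg_div]
  simpa [hscale, Real.dist_eq, ← sub_div, abs_div, abs_of_pos (sqrt_pos.2 hc)] using
    lipschitzWith_one_exp_neg_sq.dist_le_mul (a / √c) (b / √c)

lemma abs_exp_sub_exp_le_one {x y : ℝ} (hx : x ≤ 0) (hy : y ≤ 0) : |exp x - exp y| ≤ 1 :=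
  abs_sub_le_of_nonneg_of_le (exp_nonneg x) (exp_le_one_iff.2 hx) (exp_nonneg y)
    (exp_le_one_iff.2 hy)

lemma inv_sqrt_eq_rpow {u : ℝ} (hu : 0 ≤ u) : (√u)⁻¹ = u ^ (-(1 / 2) : ℝ) := by
  rw [sqrt_eq_rpow, rpow_neg hu]

lemma intervalIntegrable_inv_sqrt {c : ℝ} (hc : 0 ≤ c) :
    IntervalIntegrable (fun u : ℝ => (√u)⁻¹) volume 0 c :=
  (intervalIntegrable_rpow' (by norm_num)).congr fun u hu =>
    (inv_sqrt_eq_rpow (uIoc_of_le hc ▸ hu).1.le).symm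

lemma integral_inv_sqrt {c : ℝ} (hc : 0 ≤ c) : ∫ u in 0..c, (√u)⁻¹ = 2 * √c := by
  rw [integral_congr fun u hu => inv_sqrt_eq_rpow (uIcc_of_le hc ▸ hu).1,
    integral_rpow (by norm_num), sqrt_eq_rpow]
  norm_num
  ring

section InverseSqrtBound

variable {F : ℝ → ℝ}

lemma intervalIntegrable_of_le_inv_sqrt (hF : ContinuousOn F (Ioi 0))
    (hF_nonneg : ∀ u > 0, 0 ≤ F u) (hF_le : ∀ u > 0, F u ≤ (√u)⁻¹) {c : ℝ} (hc : 0 ≤ c) :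
    IntervalIntegrable F volume 0 c := by
  refine (intervalIntegrable_inv_sqrt hc).mono_fun' ?_ ?_
  · rw [uIoc_of_le hc]
    exact (hF.mono Ioc_subset_Ioi_self).aestronglyMeasurable measurableSet_Ioc
  · rw [uIoc_of_le hc]
    filter_upwards [ae_restrict_mem measurableSet_Ioc] with u hu
    rw [norm_of_nonneg (hF_nonneg u hu.1)]
    exact hF_le u hu.1

lemma integral_le_two_sqrt_of_le_inv_sqrt (hF : ContinuousOn F (Ioi 0))
    (hF_nonneg : ∀ u > 0, 0 ≤ F u) (hF_le : ∀ u > 0, F u ≤ (√u)⁻¹) {c : ℝ} (hc : 0 ≤ c) :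
    ∫ u in 0..c, F u ≤ 2 * √c :=
  (integral_mono_on_of_le_Ioo hc (intervalIntegrable_of_le_inv_sqrt hF hF_nonneg hF_le hc)
    (intervalIntegrable_inv_sqrt hc) fun u hu => hF_le u hu.1).trans_eq (integral_inv_sqrt hc)

lemma integral_le_mul_two_add_posLog (hF : ContinuousOn F (Ioi 0))
    (hF_nonneg : ∀ u > 0, 0 ≤ F u) (hF_le : ∀ u > 0, F u ≤ (√u)⁻¹) {h c : ℝ} (hh : 0 < h)
    (hc : 0 ≤ c) (hF_le_div : ∀ u > 0, F u ≤ h / u) :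
    ∫ u in 0..c, F u ≤ h * (2 + log⁺ (c / h ^ 2)) := by
  have hh2 : 0 < h ^ 2 := by positivity
  rcases le_or_gt c (h ^ 2) with hch | hch
  · calc ∫ u in 0..c, F u ≤ 2 * √c := integral_le_two_sqrt_of_le_inv_sqrt hF hF_nonneg hF_le hc
      _ ≤ 2 * h := by gcongr; exact (sqrt_le_left hh.le).2 hch
      _ ≤ h * (2 + log⁺ (c / h ^ 2)) := by nlinarith [posLog_nonneg (x := c / h ^ 2)]
  have hF_int : IntervalIntegrable F volume (h ^ 2) c :=
    (hF.mono fun u hu => hh2.trans_le hu.1).intervalIntegrable_of_Icc hch.le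
  have hfar : ∫ u in h ^ 2..c, F u ≤ h * log (c / h ^ 2) := calc
    _ ≤ ∫ u in h ^ 2..c, h * u⁻¹ := by
      refine integral_mono_on_of_le_Ioo hch.le hF_int ?_ fun u hu => ?_
      · exact (continuousOn_const.mul (continuousOn_inv₀.mono fun u hu => (hh2.trans_le
          (uIcc_of_le hch.le ▸ hu).1).ne')).intervalIntegrable
      · simpa [div_eq_mul_inv] using hF_le_div u (hh2.trans hu.1)
    _ = h * log (c / h ^ 2) := by
      rw [intervalIntegral.integral_const_mul, integral_inv_of_pos hh2 (hh2.trans hch)]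
  calc ∫ u in 0..c, F u = (∫ u in 0..h ^ 2, F u) + ∫ u in h ^ 2..c, F u :=
        (integral_add_adjacent_intervals
          (intervalIntegrable_of_le_inv_sqrt hF hF_nonneg hF_le hh2.le) hF_int).symm
    _ ≤ 2 * √(h ^ 2) + h * log (c / h ^ 2) :=
        add_le_add (integral_le_two_sqrt_of_le_inv_sqrt hF hF_nonneg hF_le hh2.le) hfar
    _ ≤ h * (2 + log⁺ (c / h ^ 2)) := by
        rw [sqrt_sq hh.le, posLog_apply]
        nlinarith [le_max_right 0 (log (c / h ^ 2))]

end InverseSqrtBound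

lemma integral_abs_exp_sub_div_sqrt_le {a b : ℝ} (hab : a ≠ b) {c : ℝ} (hc : 0 ≤ c) :
    ∫ u in 0..c, |exp (-a ^ 2 / (4 * u)) - exp (-b ^ 2 / (4 * u))| / √u
      ≤ |a - b| * (2 + log⁺ (c / (a - b) ^ 2)) := by
  rw [← sq_abs (a - b)]
  refine integral_le_mul_two_add_posLog ?_ (fun u _ => by positivity) (fun u hu => ?_)
    (abs_pos.2 (sub_ne_zero.2 hab)) hc fun u hu => ?_
  · exact ContinuousOn.div (by fun_prop (disch := intro u hu; exact (mul_pos four_pos hu).ne'))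
      continuous_sqrt.continuousOn fun u hu => (sqrt_pos.2 hu).ne'
  · rw [inv_eq_one_div]
    have hexp_nonpos (r : ℝ) : -r ^ 2 / (4 * u) ≤ 0 :=
      div_nonpos_of_nonpos_of_nonneg (neg_nonpos.2 (sq_nonneg r)) (by linarith)
    exact div_le_div_of_nonneg_right (abs_exp_sub_exp_le_one (hexp_nonpos a) (hexp_nonpos b))
      (sqrt_nonneg u)
  · calc _ ≤ |a - b| / √(4 * u) / √u := by
          gcongr
          exact abs_exp_neg_sq_div_sub_le (by positivity) a b
      _ = |a - b| / (2 * u) := by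
          rw [show (4 : ℝ) * u = 2 ^ 2 * u by norm_num, sqrt_mul (by norm_num), sqrt_sq two_pos.le,
            div_div, mul_assoc, mul_self_sqrt hu.le]
      _ ≤ |a - b| / u := by gcongr; linarith

theorem exp_difference_integral_estimate_near_general (T : ℝ) :
    ∃ C > (0:ℝ), ∀ t x y h : ℝ, 0 < t → t ≤ T → |x - y| ≤ 2 → 0 < h → h ≤ 1 →
      (∫ s in (0:ℝ)..t,
          |Real.exp (-(x - y - h) ^ 2 / (4 * (t - s))) -
              Real.exp (-(x - y) ^ 2 / (4 * (t - s)))| / Real.sqrt (t - s))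
        ≤ C * h * (1 + |Real.log h|) := by
  refine ⟨2 + |log T|, by positivity, fun t x y h ht htT _ hh _ => ?_⟩
  have hdiff : x - y - h - (x - y) = -h := by ring
  have hlog : log⁺ (t / h ^ 2) ≤ |log T| + 2 * |log h| := by
    rw [posLog_apply, log_div ht.ne' (by positivity), log_pow]
    refine max_le (by positivity) ?_
    have := (log_le_log ht htT).trans (le_abs_self _)
    have := neg_le_abs (log h)
    push_cast
    linarith
  calc (∫ s in (0:ℝ)..t, |exp (-(x - y - h) ^ 2 / (4 * (t - s))) -
          exp (-(x - y) ^ 2 / (4 * (t - s)))| / √(t - s))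
      = ∫ u in 0..t, |exp (-(x - y - h) ^ 2 / (4 * u)) - exp (-(x - y) ^ 2 / (4 * u))| / √u := by
        simpa using integral_comp_sub_left (a := 0) (b := t)
          (fun u => |exp (-(x - y - h) ^ 2 / (4 * u)) - exp (-(x - y) ^ 2 / (4 * u))| / √u) t
    _ ≤ h * (2 + log⁺ (t / h ^ 2)) := by
        simpa [hdiff, abs_of_pos hh] using
          integral_abs_exp_sub_div_sqrt_le (by linarith : x - y - h ≠ x - y) ht.le
    _ ≤ h * (2 + (|log T| + 2 * |log h|)) := by gcongr
    _ ≤ (2 + |log T|) * h * (1 + |log h|) := by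
        nlinarith [mul_nonneg (abs_nonneg (log T)) (mul_nonneg hh.le (abs_nonneg (log h)))]

/-- For the heat kernel there is a constant `C` such that for all `t ∈ (0,T]`,
`|x-y| ≤ 2` and `0 < h ≤ 1`:
`∫₀ᵗ |e^{-(x-y-h)²/(4(t-s))} - e^{-(x-y)²/(4(t-s))}|/√(t-s) ds ≤ C·h·(1+|ln h|)`. -/
theorem exp_difference_integral_estimate_near (T : ℝ) (hT : 0 < T) :
    ∃ C > (0:ℝ), ∀ t x y h : ℝ, 0 < t → t ≤ T → |x - y| ≤ 2 → 0 < h → h ≤ 1 →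
      (∫ s in (0:ℝ)..t,
          |Real.exp (-(x - y - h) ^ 2 / (4 * (t - s))) -
              Real.exp (-(x - y) ^ 2 / (4 * (t - s)))| / Real.sqrt (t - s))
        ≤ C * h * (1 + |Real.log h|) :=
  exp_difference_integral_estimate_near_general T
end
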